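/- Let k be a finite field with |k| = q. Let 𝒢 = {g_1,…,g_n} ⊆ k[x_1,…,x_n] with deg g_i ≤ d for all i, and let f_i ∈ k[x_i] be univariate polynomials for i = 1,…,n. Suppose the column vector (g_1,…,g_n)ᵀ equals ρ∘(f_1,…,f_n)ᵀ∘λ for some ρ, λ ∈ GL_n(k) (i.e. each g_i is a k-linear combination, with coefficient matrix ρ, of the polynomials f_j composed with the j-th coordinate form of λ). Let ℰ = {x_i^q − x_i : i = 1,…,n}. Then the last fall degree satisfies d_{𝒢∪ℰ} ≤ d + q. -/

import Mathlib

open MvPolynomial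

noncomputable def Vsp {σ K : Type*} [Field K]
    (F : Set (MvPolynomial σ K)) (i : ℕ) : Submodule K (MvPolynomial σ K) :=
  sInf {V : Submodule K (MvPolynomial σ K) |
    (∀ f ∈ F, f.totalDegree ≤ i → f ∈ V) ∧
    ∀ g ∈ V, ∀ h : MvPolynomial σ K, (h * g).totalDegree ≤ i → h * g ∈ V}

section VspAux
variable {σ K : Type*} [Field K] {F : Set (MvPolynomial σ K)} {i : ℕ}

lemma Vsp_le {V : Submodule K (MvPolynomial σ K)}
    (h1 : ∀ f ∈ F, f.totalDegree ≤ i → f ∈ V)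
    (h2 : ∀ g ∈ V, ∀ h : MvPolynomial σ K, (h * g).totalDegree ≤ i → h * g ∈ V) :
    Vsp F i ≤ V := sInf_le ⟨h1, h2⟩

lemma mem_Vsp_of_mem {f : MvPolynomial σ K} (hf : f ∈ F) (hd : f.totalDegree ≤ i) :
    f ∈ Vsp F i :=
  Submodule.mem_sInf.2 fun _ hV => hV.1 f hf hd

lemma mul_mem_Vsp {g : MvPolynomial σ K} (hg : g ∈ Vsp F i) (h : MvPolynomial σ K)
    (hd : (h * g).totalDegree ≤ i) : h * g ∈ Vsp F i :=
  Submodule.mem_sInf.2 fun V hV => hV.2 g (Submodule.mem_sInf.1 hg V hV) h hd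

lemma Vsp_le_restrict : Vsp F i ≤ restrictTotalDegree σ K i := by
  apply Vsp_le
  · intro f _ hd
    exact (mem_restrictTotalDegree σ i f).2 hd
  · intro g _ h hd
    exact (mem_restrictTotalDegree σ i _).2 hd

lemma totalDegree_le_of_mem_Vsp {g : MvPolynomial σ K} (hg : g ∈ Vsp F i) :
    g.totalDegree ≤ i :=
  (mem_restrictTotalDegree σ i g).1 (Vsp_le_restrict hg)

lemma Vsp_le_Vsp {F' : Set (MvPolynomial σ K)}
    (h : ∀ f ∈ F, f.totalDegree ≤ i → f ∈ Vsp F' i) : Vsp F i ≤ Vsp F' i :=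
  Vsp_le h fun g hg h' hd => mul_mem_Vsp hg h' hd

lemma Vsp_mono {j : ℕ} (hij : i ≤ j) : Vsp F i ≤ Vsp F j := by
  apply Vsp_le
  · intro f hf hd; exact mem_Vsp_of_mem hf (hd.trans hij)
  · intro g hg h hd; exact mul_mem_Vsp hg h (hd.trans hij)

lemma Vsp_le_span_inf :
    Vsp F i ≤ (Ideal.span F).restrictScalars K ⊓ restrictTotalDegree σ K i := by
  refine le_inf ?_ Vsp_le_restrict
  apply Vsp_le
  · intro f hf _; exact Ideal.subset_span hf
  · intro g hg h _; exact Ideal.mul_mem_left _ h hg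

end VspAux
open MvPolynomial

lemma grid_vanish {k : Type*} [Field k] :
    ∀ (n : ℕ) (p : MvPolynomial (Fin n) k) (S : Fin n → Finset k),
    (∀ j, degreeOf j p < (S j).card) →
    (∀ z : Fin n → k, (∀ j, z j ∈ S j) → eval z p = 0) → p = 0 := by
  intro n
  induction n with
  | zero =>
    intro p S hd hz
    have h0 : eval (fun j : Fin 0 => (0 : k)) p = 0 := hz _ (fun j => j.elim0)
    obtain ⟨c, rfl⟩ := (MvPolynomial.C_surjective (Fin 0)) p
    simp only [eval_C] at h0
    simp [h0]
  | succ n ih =>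
    intro p S hd hz
    set q := finSuccEquiv k n p with hqdef
    have hcoeff : ∀ i : ℕ, q.coeff i = 0 := by
      intro i
      apply ih (q.coeff i) (fun j => S j.succ)
      · intro j
        exact lt_of_le_of_lt (degreeOf_coeff_finSuccEquiv p j i) (hd j.succ)
      · intro z hzmem
        set t : Polynomial k := Polynomial.map (eval z) q with htdef
        have ht0 : t = 0 := by
          apply Polynomial.eq_zero_of_natDegree_lt_card_of_eval_eq_zero' t (S 0)
          · intro a ha
            rw [htdef, hqdef, ← eval_eq_eval_mv_eval']
            exact hz _ (fun j => Fin.cases ha hzmem j)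
          · calc t.natDegree ≤ q.natDegree := Polynomial.natDegree_map_le
              _ = degreeOf 0 p := natDegree_finSuccEquiv p
              _ < (S 0).card := hd 0
        have := congrArg (fun r => Polynomial.coeff r i) ht0
        simpa [htdef, Polynomial.coeff_map] using this
    have hq : q = 0 := Polynomial.ext fun i => by simp [hcoeff i]
    have := congrArg (finSuccEquiv k n).symm hq
    simpa [hqdef] using this

section
variable {k : Type*} [Field k] [DecidableEq k] {n : ℕ}

/-- polynomials all of whose monomials have exponent of `y_j` less than `d j` -/
def RedSub (d : Fin n → ℕ) : Submodule k (MvPolynomial (Fin n) k) where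
  carrier := {p | ∀ u ∈ p.support, ∀ j, u j < d j}
  zero_mem' := by simp
  add_mem' := by
    intro a b ha hb u hu j
    rcases Finset.mem_union.1 (MvPolynomial.support_add hu) with h | h
    · exact ha u h j
    · exact hb u h j
  smul_mem' := by
    intro c p hp u hu j
    exact hp u (MvPolynomial.support_smul hu) j

lemma totalDegree_polyaeval_le {σ : Type*} (P : Polynomial k) (w : MvPolynomial σ k) :
    (Polynomial.aeval w P).totalDegree ≤ P.natDegree * w.totalDegree := by
  conv_lhs => rw [P.as_sum_range' (P.natDegree + 1) (Nat.lt_succ_self _)]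
  rw [map_sum]
  apply (totalDegree_finset_sum _ _).trans
  apply Finset.sup_le
  intro i hi
  rw [Finset.mem_range, Nat.lt_succ_iff] at hi
  rw [Polynomial.aeval_monomial]
  calc (algebraMap k _ (P.coeff i) * w ^ i).totalDegree
      ≤ (algebraMap k (MvPolynomial σ k) (P.coeff i)).totalDegree + (w ^ i).totalDegree :=
        totalDegree_mul _ _
    _ ≤ 0 + i * w.totalDegree := by
        gcongr
        · exact le_of_eq (totalDegree_C _)
        · exact totalDegree_pow _ _
    _ ≤ P.natDegree * w.totalDegree := by simp; exact Nat.mul_le_mul_right _ hi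

lemma totalDegree_polyaeval_X_le (P : Polynomial k) (j : Fin n) :
    (Polynomial.aeval (X j : MvPolynomial (Fin n) k) P).totalDegree ≤ P.natDegree := by
  simpa [totalDegree_X] using totalDegree_polyaeval_le P (X j : MvPolynomial (Fin n) k)

end

section Division
variable {k : Type*} [Field k] [DecidableEq k] {n : ℕ}

lemma monic_tail_degree {r : Polynomial k} (hm : r.Monic) :
    (r - Polynomial.X ^ r.natDegree).degree < (r.natDegree : WithBot ℕ) := by
  have h := Polynomial.degree_sub_lt (p := r) (q := Polynomial.X ^ r.natDegree)
    (by rw [Polynomial.degree_X_pow, Polynomial.degree_eq_natDegree hm.ne_zero]) hm.ne_zero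
    (by rw [Polynomial.leadingCoeff_X_pow]; exact hm)
  rwa [Polynomial.degree_eq_natDegree hm.ne_zero] at h

lemma division_lemma (F : Set (MvPolynomial (Fin n) k)) (e : ℕ)
    (r : Fin n → Polynomial k) (hmon : ∀ j, (r j).Monic)
    (hrV : ∀ j, Polynomial.aeval (X j : MvPolynomial (Fin n) k) (r j) ∈ Vsp F e) :
    ∀ D, D ≤ e → ∀ p : MvPolynomial (Fin n) k, p.totalDegree ≤ D →
      p ∈ Vsp F e ⊔ RedSub (fun j => (r j).natDegree) := by
  intro D
  induction D using Nat.strong_induction_on with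
  | _ D IH =>
  intro hDe p hp
  rw [← support_sum_monomial_coeff p]
  apply Submodule.sum_mem
  intro u hu
  have hus : (u.sum fun _ m => m) ≤ D := le_trans (le_totalDegree hu) hp
  set c := coeff u p with hc
  clear_value c
  clear hc hu hp p
  by_cases hred : ∀ j, u j < (r j).natDegree
  · apply Submodule.mem_sup_right
    intro u' hu' j
    classical
    rw [support_monomial] at hu'
    by_cases hc0 : c = 0
    · simp [hc0] at hu'
    · simp [hc0] at hu'; subst hu'; exact hred j
  · push_neg at hred
    obtain ⟨j, hj⟩ := hred  -- hj : (r j).natDegree ≤ u j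
    set dj := (r j).natDegree with hdj
    set u' : (Fin n) →₀ ℕ := u - Finsupp.single j dj with hu'
    have husum : u' + Finsupp.single j dj = u := by
      ext t
      by_cases ht : t = j
      · subst ht
        simp [hu', Nat.sub_add_cancel hj]
      · simp [hu', Finsupp.single_apply, Ne.symm ht, ht]
    have hu'sum : (u'.sum fun _ m => m) + dj = u.sum fun _ m => m := by
      rw [← husum, Finsupp.sum_add_index' (fun _ => rfl) (fun _ _ _ => rfl)]
      simp [Finsupp.sum_single_index]
    set tail := r j - Polynomial.X ^ dj with htail
    have key : (monomial u c : MvPolynomial (Fin n) k) =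
        monomial u' c * Polynomial.aeval (X j) (r j)
          - monomial u' c * Polynomial.aeval (X j) tail := by
      rw [← mul_sub, ← map_sub]
      have : r j - tail = Polynomial.X ^ dj := by ring
      rw [this, map_pow, Polynomial.aeval_X, X_pow_eq_monomial, monomial_mul, husum, mul_one]
    rw [key]
    apply Submodule.sub_mem
    · apply Submodule.mem_sup_left
      apply mul_mem_Vsp (hrV j)
      calc (monomial u' c * Polynomial.aeval (X j) (r j)).totalDegree
          ≤ (monomial u' c).totalDegree + (Polynomial.aeval (X j : MvPolynomial (Fin n) k) (r j)).totalDegree :=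
            totalDegree_mul _ _
        _ ≤ (u'.sum fun _ m => m) + dj := by
            gcongr
            · exact totalDegree_monomial_le _ _
            · exact totalDegree_polyaeval_X_le _ _
        _ ≤ D := by rw [hu'sum]; exact hus
        _ ≤ e := hDe
    · by_cases ht0 : tail = 0
      · simp [ht0]
      · have hdtail : tail.natDegree < dj := by
          have := monic_tail_degree (hmon j)
          rw [← htail, ← hdj] at this
          exact (Polynomial.natDegree_lt_iff_degree_lt ht0).2 this
        have hdj1 : 1 ≤ dj := Nat.pos_of_ne_zero (by omega)
        have husum1 : 1 ≤ u.sum fun _ m => m := by omega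
        have hdeg2 : (monomial u' c * Polynomial.aeval (X j) tail).totalDegree ≤
            (u.sum fun _ m => m) - 1 := by
          calc (monomial u' c * Polynomial.aeval (X j) tail).totalDegree
              ≤ (monomial u' c).totalDegree +
                (Polynomial.aeval (X j : MvPolynomial (Fin n) k) tail).totalDegree :=
                totalDegree_mul _ _
            _ ≤ (u'.sum fun _ m => m) + tail.natDegree := by
                gcongr
                · exact totalDegree_monomial_le _ _
                · exact totalDegree_polyaeval_X_le _ _
            _ ≤ (u.sum fun _ m => m) - 1 := by omega
        exact IH ((u.sum fun _ m => m) - 1) (by omega) (by omega) _ hdeg2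

end Division

section Key
variable {k : Type*} [Field k] [DecidableEq k] {n : ℕ}

lemma red_inter_ideal_eq_zero (r : Fin n → Polynomial k) (hne : ∀ j, r j ≠ 0)
    (hroots : ∀ j, (r j).roots.toFinset.card = (r j).natDegree)
    {s : MvPolynomial (Fin n) k}
    (hs : s ∈ Ideal.span (Set.range fun j => Polynomial.aeval (X j : MvPolynomial (Fin n) k) (r j)))
    (hred : s ∈ RedSub (fun j => (r j).natDegree)) : s = 0 := by
  by_cases hs0 : s = 0
  · exact hs0
  · apply grid_vanish n s (fun j => (r j).roots.toFinset)
    · intro j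
      obtain ⟨u, hu⟩ := (MvPolynomial.support_nonempty.2 hs0)
      rw [hroots j, degreeOf_lt_iff (lt_of_le_of_lt (Nat.zero_le _) (hred u hu j))]
      intro m hm
      exact hred m hm j
    · intro z hz
      have h2 : ∀ p : MvPolynomial (Fin n) k, MvPolynomial.aeval z p = eval z p := by
        intro p; rw [← MvPolynomial.coe_aeval_eq_eval]; rfl
      rw [← h2 s]
      have hker : Ideal.span (Set.range fun j =>
          Polynomial.aeval (X j : MvPolynomial (Fin n) k) (r j)) ≤
          RingHom.ker (RingHomClass.toRingHom
            (MvPolynomial.aeval z : MvPolynomial (Fin n) k →ₐ[k] k)) := by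
        rw [Ideal.span_le]
        rintro _ ⟨j, rfl⟩
        rw [SetLike.mem_coe, RingHom.mem_ker]
        show (MvPolynomial.aeval z) (Polynomial.aeval (X j : MvPolynomial (Fin n) k) (r j)) = 0
        rw [← Polynomial.aeval_algHom_apply, aeval_X, Polynomial.coe_aeval_eq_eval]
        have hzj := hz j
        rw [Multiset.mem_toFinset, Polynomial.mem_roots (hne j)] at hzj
        exact hzj
      exact hker hs

theorem Vsp_eq_span_inf (F : Set (MvPolynomial (Fin n) k)) (e : ℕ)
    (r : Fin n → Polynomial k) (hmon : ∀ j, (r j).Monic)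
    (hroots : ∀ j, (r j).roots.toFinset.card = (r j).natDegree)
    (hrV : ∀ j, Polynomial.aeval (X j : MvPolynomial (Fin n) k) (r j) ∈ Vsp F e)
    (hspan : Ideal.span F =
      Ideal.span (Set.range fun j => Polynomial.aeval (X j : MvPolynomial (Fin n) k) (r j))) :
    Vsp F e = (Ideal.span F).restrictScalars k ⊓ restrictTotalDegree (Fin n) k e := by
  refine le_antisymm Vsp_le_span_inf ?_
  rintro p hp
  rw [Submodule.mem_inf] at hp
  obtain ⟨hpI, hpd⟩ := hp
  rw [Submodule.restrictScalars_mem] at hpI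
  rw [mem_restrictTotalDegree] at hpd
  have hdiv := division_lemma F e r hmon hrV e le_rfl p hpd
  rw [Submodule.mem_sup] at hdiv
  obtain ⟨t, ht, s, hs, hts⟩ := hdiv
  have htI : t ∈ Ideal.span F := by
    have := Vsp_le_span_inf ht
    rw [Submodule.mem_inf, Submodule.restrictScalars_mem] at this
    exact this.1
  have hsI : s ∈ Ideal.span (Set.range fun j =>
      Polynomial.aeval (X j : MvPolynomial (Fin n) k) (r j)) := by
    rw [← hspan]
    have hseq : s = p - t := by rw [← hts]; ring
    rw [hseq]
    exact Ideal.sub_mem _ hpI htI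
  have hs0 : s = 0 := red_inter_ideal_eq_zero r (fun j => (hmon j).ne_zero) hroots hsI hs
  rw [← hts, hs0, add_zero]
  exact ht

end Key

section Gcd
variable {k : Type*} [Field k] [DecidableEq k] {n : ℕ}

lemma gcd_mem_Vsp (F : Set (MvPolynomial (Fin n) k)) (e : ℕ) (j : Fin n)
    (a b : Polynomial k) :
    a.natDegree ≤ e → b.natDegree ≤ e →
    Polynomial.aeval (X j : MvPolynomial (Fin n) k) a ∈ Vsp F e →
    Polynomial.aeval (X j : MvPolynomial (Fin n) k) b ∈ Vsp F e →
    Polynomial.aeval (X j : MvPolynomial (Fin n) k) (EuclideanDomain.gcd a b) ∈ Vsp F e := by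
  induction a, b using EuclideanDomain.GCD.induction with
  | H0 b =>
    intro _ _ _ hb
    rwa [EuclideanDomain.gcd_zero_left]
  | H1 a b ha0 IH =>
    intro hda hdb hma hmb
    rw [EuclideanDomain.gcd_val]
    have hmod : b % a = b - a * (b / a) := EuclideanDomain.mod_eq_sub_mul_div b a
    have hq : a * (b / a) = b - b % a := by rw [hmod]; ring
    have hdqa : (a * (b / a)).natDegree ≤ e := by
      rw [hq]
      refine (Polynomial.natDegree_sub_le _ _).trans (max_le hdb ?_)
      have : (b % a).degree < a.degree := EuclideanDomain.mod_lt _ ha0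
      by_cases hba : b % a = 0
      · simp [hba]
      · exact ((Polynomial.natDegree_lt_natDegree_iff hba).2 this).le.trans hda
    have hdmod : (b % a).natDegree ≤ e := by
      have : (b % a).degree < a.degree := EuclideanDomain.mod_lt _ ha0
      by_cases hba : b % a = 0
      · simp [hba]
      · exact ((Polynomial.natDegree_lt_natDegree_iff hba).2 this).le.trans hda
    have hmem_q : Polynomial.aeval (X j : MvPolynomial (Fin n) k) (a * (b / a)) ∈ Vsp F e := by
      rw [map_mul, mul_comm]
      apply mul_mem_Vsp hma
      rw [mul_comm, ← map_mul]
      exact (totalDegree_polyaeval_X_le _ _).trans hdqa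
    have hmem_mod : Polynomial.aeval (X j : MvPolynomial (Fin n) k) (b % a) ∈ Vsp F e := by
      rw [hmod, map_sub]
      exact Submodule.sub_mem _ hmb hmem_q
    exact IH hdmod hda hmem_mod hma

end Gcd

section MoreAux
variable {k : Type*} [Field k] {n : ℕ}

lemma coeff_single_polyaeval (P : Polynomial k) (j : Fin n) (m : ℕ) :
    coeff (Finsupp.single j m) (Polynomial.aeval (X j : MvPolynomial (Fin n) k) P) =
      P.coeff m := by
  induction P using Polynomial.induction_on' with
  | add p q hp hq => rw [map_add, coeff_add, hp, hq, Polynomial.coeff_add]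
  | monomial i c =>
    rw [Polynomial.aeval_monomial, X_pow_eq_monomial]
    have : (algebraMap k (MvPolynomial (Fin n) k)) c = C c := rfl
    rw [this, C_mul_monomial, coeff_monomial, Polynomial.coeff_monomial]
    by_cases him : i = m
    · subst him; simp
    · rw [if_neg him, if_neg]
      intro hcon
      exact him (Finsupp.single_injective j hcon)

lemma natDegree_le_totalDegree_polyaeval (P : Polynomial k) (j : Fin n) :
    P.natDegree ≤ (Polynomial.aeval (X j : MvPolynomial (Fin n) k) P).totalDegree := by
  by_cases hP : P = 0
  · simp [hP]
  · apply le_trans _ (le_totalDegree (s := Finsupp.single j P.natDegree) _)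
    · simp [Finsupp.sum_single_index]
    · rw [mem_support_iff, coeff_single_polyaeval]
      exact Polynomial.leadingCoeff_ne_zero.2 hP

lemma totalDegree_mvaeval_le (v : Fin n → MvPolynomial (Fin n) k)
    (hv : ∀ t, (v t).totalDegree ≤ 1) (p : MvPolynomial (Fin n) k) :
    (MvPolynomial.aeval v p).totalDegree ≤ p.totalDegree := by
  conv_lhs => rw [← support_sum_monomial_coeff p]
  rw [map_sum]
  apply (totalDegree_finset_sum _ _).trans
  apply Finset.sup_le
  intro u hu
  rw [aeval_monomial]
  apply (totalDegree_mul _ _).trans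
  have h1 : (algebraMap k (MvPolynomial (Fin n) k) (coeff u p)).totalDegree = 0 :=
    totalDegree_C _
  rw [h1, zero_add]
  calc (u.prod fun t e => v t ^ e).totalDegree
      ≤ ∑ t ∈ u.support, (v t ^ u t).totalDegree := totalDegree_finset_prod _ _
    _ ≤ ∑ t ∈ u.support, u t * 1 := by
        apply Finset.sum_le_sum
        intro t _
        exact (totalDegree_pow _ _).trans (Nat.mul_le_mul_left _ (hv t))
    _ = u.sum fun _ m => m := by simp [Finsupp.sum]
    _ ≤ p.totalDegree := le_totalDegree hu

end MoreAux

section Transport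
variable {k : Type*} [Field k] {n : ℕ}

lemma Vsp_map_mem (φ : MvPolynomial (Fin n) k →ₐ[k] MvPolynomial (Fin n) k)
    (hφd : ∀ p : MvPolynomial (Fin n) k, (φ p).totalDegree ≤ p.totalDegree)
    (F : Set (MvPolynomial (Fin n) k)) (i : ℕ)
    {p : MvPolynomial (Fin n) k} (hp : p ∈ Vsp F i) : φ p ∈ Vsp (φ '' F) i := by
  have hle : Vsp F i ≤ Submodule.comap (φ.toLinearMap) (Vsp (φ '' F) i) := by
    apply Vsp_le
    · intro f hf hd
      exact mem_Vsp_of_mem ⟨f, hf, rfl⟩ ((hφd f).trans hd)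
    · intro g hg h hd
      simp only [Submodule.mem_comap, AlgHom.toLinearMap_apply] at hg ⊢
      rw [map_mul]
      exact mul_mem_Vsp hg (φ h) (by rw [← map_mul]; exact (hφd _).trans hd)
  exact hle hp

lemma Vsp_mem_iff (φ ψ : MvPolynomial (Fin n) k →ₐ[k] MvPolynomial (Fin n) k)
    (hψφ : ∀ p, ψ (φ p) = p)
    (hφd : ∀ p : MvPolynomial (Fin n) k, (φ p).totalDegree ≤ p.totalDegree)
    (hψd : ∀ p : MvPolynomial (Fin n) k, (ψ p).totalDegree ≤ p.totalDegree)
    (F : Set (MvPolynomial (Fin n) k)) (i : ℕ) (p : MvPolynomial (Fin n) k) :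
    p ∈ Vsp F i ↔ φ p ∈ Vsp (φ '' F) i := by
  constructor
  · exact Vsp_map_mem φ hφd F i
  · intro h
    have := Vsp_map_mem ψ hψd (φ '' F) i h
    have himg : ψ '' (φ '' F) = F := by
      rw [← Set.image_comp]
      ext x
      constructor
      · rintro ⟨y, hy, rfl⟩; simpa [hψφ y] using hy
      · intro hx; exact ⟨x, hx, hψφ x⟩
    rwa [hψφ p, himg] at this

lemma totalDegree_eq_of_inv (φ ψ : MvPolynomial (Fin n) k →ₐ[k] MvPolynomial (Fin n) k)
    (hψφ : ∀ p, ψ (φ p) = p)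
    (hφd : ∀ p : MvPolynomial (Fin n) k, (φ p).totalDegree ≤ p.totalDegree)
    (hψd : ∀ p : MvPolynomial (Fin n) k, (ψ p).totalDegree ≤ p.totalDegree)
    (p : MvPolynomial (Fin n) k) : (φ p).totalDegree = p.totalDegree := by
  refine le_antisymm (hφd p) ?_
  conv_lhs => rw [← hψφ p]
  exact hψd (φ p)

lemma sum_C_mul_collapse {A B : Matrix (Fin n) (Fin n) k} (hAB : A * B = 1)
    (v : Fin n → MvPolynomial (Fin n) k) (t : Fin n) :
    ∑ i, C (A t i) * (∑ s, C (B i s) * v s) = v t := by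
  have step1 : ∀ i, C (A t i) * (∑ s, C (B i s) * v s)
      = ∑ s, C (A t i * B i s) * v s := by
    intro i
    rw [Finset.mul_sum]
    congr 1; ext s
    rw [map_mul, mul_assoc]
  calc ∑ i, C (A t i) * (∑ s, C (B i s) * v s)
      = ∑ i, ∑ s, C (A t i * B i s) * v s := by simp_rw [step1]
    _ = ∑ s, ∑ i, C (A t i * B i s) * v s := Finset.sum_comm
    _ = ∑ s, C ((A * B) t s) * v s := by
        congr 1; ext s
        rw [← Finset.sum_mul, ← map_sum, Matrix.mul_apply]
    _ = v t := by
        rw [hAB]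
        have : ∀ s, C ((1 : Matrix (Fin n) (Fin n) k) t s) * v s
            = if t = s then v s else 0 := by
          intro s
          rw [Matrix.one_apply]
          by_cases h : t = s <;> simp [h]
        simp_rw [this]
        simp

end Transport

section FieldPoly
variable {k : Type*} [Field k] [Fintype k] [DecidableEq k]

lemma roots_card_of_dvd_fieldpoly {q : ℕ} (hq : Fintype.card k = q) {r : Polynomial k}
    (hr : r ≠ 0) (hdvd : r ∣ (Polynomial.X ^ q - Polynomial.X)) :
    r.roots.toFinset.card = r.natDegree := by
  have hq2 : 1 < q := hq ▸ Fintype.one_lt_card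
  have hs0 : (Polynomial.X ^ q - Polynomial.X : Polynomial k) ≠ 0 :=
    FiniteField.X_pow_card_sub_X_ne_zero k hq2
  have hroots : (Polynomial.X ^ q - Polynomial.X : Polynomial k).roots = Finset.univ.val := by
    rw [← hq]; exact FiniteField.roots_X_pow_card_sub_X k
  have hsplits : (Polynomial.X ^ q - Polynomial.X : Polynomial k).Splits := by
    rw [Polynomial.splits_iff_card_roots, hroots,
      FiniteField.X_pow_card_sub_X_natDegree_eq k hq2]
    simpa using hq
  have hrsplits := Polynomial.Splits.of_dvd hsplits hs0 hdvd
  have hnodup : r.roots.Nodup := by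
    have hle : r.roots ≤ (Polynomial.X ^ q - Polynomial.X : Polynomial k).roots :=
      Polynomial.roots.le_of_dvd hs0 hdvd
    rw [hroots] at hle
    exact Multiset.nodup_of_le hle Finset.univ.nodup
  rw [Multiset.toFinset_card_of_nodup hnodup]
  exact Polynomial.splits_iff_card_roots.1 hrsplits

lemma frobenius_linear_comb {n : ℕ} {q : ℕ} (hq : Fintype.card k = q) (w : Fin n → k) :
    (∑ s, C (w s) * X s : MvPolynomial (Fin n) k) ^ q - (∑ s, C (w s) * X s) =
      ∑ s, C (w s) * ((X s : MvPolynomial (Fin n) k) ^ q - X s) := by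
  set p := ringChar k with hp
  haveI hCharP : CharP k p := ringChar.charP k
  obtain ⟨m, hprime, hcard⟩ := FiniteField.card k p
  haveI : Fact p.Prime := ⟨hprime⟩
  haveI : CharP (MvPolynomial (Fin n) k) p := by infer_instance
  have hqpm : q = p ^ (m : ℕ) := by rw [← hq, hcard]
  have hpow : ∀ x : MvPolynomial (Fin n) k, x ^ q =
      iterateFrobenius (MvPolynomial (Fin n) k) p (m : ℕ) x := by
    intro x; rw [iterateFrobenius_def, hqpm]
  rw [hpow, map_sum]
  have hterm : ∀ s, iterateFrobenius (MvPolynomial (Fin n) k) p (m : ℕ) (C (w s) * X s)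
      = C (w s) * (X s) ^ q := by
    intro s
    have hwc : (w s) ^ q = w s := by rw [← hq]; exact FiniteField.pow_card (w s)
    rw [map_mul, ← hpow, ← hpow, ← map_pow, hwc]
  simp_rw [hterm]
  rw [← Finset.sum_sub_distrib]
  congr 1; ext s
  rw [mul_sub]

end FieldPoly

/-- Let `k = 𝔽_q`, `𝒢 = {g₁,…,gₙ}` with `deg gᵢ ≤ d`, and suppose
`(g₁,…,gₙ)ᵀ = ρ ∘ (f₁,…,fₙ)ᵀ ∘ λ` with `ρ, λ ∈ GLₙ(k)` and `fᵢ ∈ k[xᵢ]` univariate.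
With `ℰ = {xᵢ^q − xᵢ}` the field equations, the last fall degree of `𝒢 ∪ ℰ` is at
most `d + q`: every degree at which a fall occurs is at most `d + q`. -/
theorem lastFallDegree_with_field_equations_le
    (k : Type*) [Field k] [Fintype k] (q n d : ℕ) (hq : Fintype.card k = q)
    (g : Fin n → MvPolynomial (Fin n) k) (hdeg : ∀ i, (g i).totalDegree ≤ d)
    (f : Fin n → Polynomial k) (ρ lam : GL (Fin n) k)
    (hfact : ∀ i, g i = ∑ j, C ((ρ : Matrix (Fin n) (Fin n) k) i j) *
        Polynomial.aeval (∑ t, C ((lam : Matrix (Fin n) (Fin n) k) j t) * X t) (f j)) :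
    ∀ e : ℕ,
      Vsp (Set.range g ∪
            Set.range (fun i : Fin n => (X i : MvPolynomial (Fin n) k) ^ q - X i)) e
          ⊓ restrictTotalDegree (Fin n) k (e - 1)
        ≠ Vsp (Set.range g ∪
            Set.range (fun i : Fin n => (X i : MvPolynomial (Fin n) k) ^ q - X i)) (e - 1)
      → e ≤ d + q := by
  classical
  intro e hne
  by_contra hcon
  push_neg at hcon
  apply hne
  -- basic facts about q
  have hq2 : 1 < q := hq ▸ Fintype.one_lt_card
  -- matrices
  set M : Matrix (Fin n) (Fin n) k := (lam : Matrix (Fin n) (Fin n) k) with hM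
  set N : Matrix (Fin n) (Fin n) k := ((lam⁻¹ : GL (Fin n) k) : Matrix (Fin n) (Fin n) k)
    with hN
  set P : Matrix (Fin n) (Fin n) k := (ρ : Matrix (Fin n) (Fin n) k) with hP
  set Pi : Matrix (Fin n) (Fin n) k := ((ρ⁻¹ : GL (Fin n) k) : Matrix (Fin n) (Fin n) k)
    with hPi
  have hMN : M * N = 1 := by
    rw [hM, hN, ← Units.val_mul, mul_inv_cancel lam, Units.val_one]
  have hNM : N * M = 1 := by
    rw [hM, hN, ← Units.val_mul, inv_mul_cancel lam, Units.val_one]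
  have hPiP : Pi * P = 1 := by
    rw [hP, hPi, ← Units.val_mul, inv_mul_cancel ρ, Units.val_one]
  -- the substitution algebra maps
  set vφ : Fin n → MvPolynomial (Fin n) k := fun t => ∑ s, C (N t s) * X s with hvφ
  set vψ : Fin n → MvPolynomial (Fin n) k := fun t => ∑ s, C (M t s) * X s with hvψ
  set φ : MvPolynomial (Fin n) k →ₐ[k] MvPolynomial (Fin n) k := MvPolynomial.aeval vφ with hφ
  set ψ : MvPolynomial (Fin n) k →ₐ[k] MvPolynomial (Fin n) k := MvPolynomial.aeval vψ with hψ
  have hdeg1 : ∀ (A : Matrix (Fin n) (Fin n) k) (t : Fin n),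
      (∑ s, C (A t s) * X s : MvPolynomial (Fin n) k).totalDegree ≤ 1 := by
    intro A t
    apply (totalDegree_finset_sum _ _).trans
    apply Finset.sup_le
    intro s _
    apply (totalDegree_mul _ _).trans
    rw [totalDegree_C, totalDegree_X]
  have hφd : ∀ p : MvPolynomial (Fin n) k, (φ p).totalDegree ≤ p.totalDegree :=
    totalDegree_mvaeval_le vφ (hdeg1 N)
  have hψd : ∀ p : MvPolynomial (Fin n) k, (ψ p).totalDegree ≤ p.totalDegree :=
    totalDegree_mvaeval_le vψ (hdeg1 M)
  have hCφ : ∀ (c : k) (p), φ (C c * p) = C c * φ p := by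
    intro c p
    rw [map_mul]
    congr 1
    rw [hφ]
    exact aeval_C _ c
  have hCψ : ∀ (c : k) (p), ψ (C c * p) = C c * ψ p := by
    intro c p
    rw [map_mul]
    congr 1
    rw [hψ]
    exact aeval_C _ c
  have hψφ : ∀ p, ψ (φ p) = p := by
    intro p
    have hcomp : (ψ.comp φ) = AlgHom.id k (MvPolynomial (Fin n) k) := by
      apply MvPolynomial.algHom_ext
      intro t
      simp only [AlgHom.comp_apply, AlgHom.id_apply]
      rw [hφ]
      rw [aeval_X, hvφ]
      simp only [map_sum]
      have : ∀ s, ψ (C (N t s) * X s) = C (N t s) * vψ s := by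
        intro s
        rw [hCψ, hψ, aeval_X]
      simp_rw [this, hvψ]
      exact sum_C_mul_collapse hNM X t
    exact AlgHom.congr_fun hcomp p
  have hφψ : ∀ p, φ (ψ p) = p := by
    intro p
    have hcomp : (φ.comp ψ) = AlgHom.id k (MvPolynomial (Fin n) k) := by
      apply MvPolynomial.algHom_ext
      intro t
      simp only [AlgHom.comp_apply, AlgHom.id_apply]
      rw [hψ]
      rw [aeval_X, hvψ]
      simp only [map_sum]
      have : ∀ s, φ (C (M t s) * X s) = C (M t s) * vφ s := by
        intro s
        rw [hCφ, hφ, aeval_X]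
      simp_rw [this, hvφ]
      exact sum_C_mul_collapse hMN X t
    exact AlgHom.congr_fun hcomp p
  -- the set of generators and its image
  set F : Set (MvPolynomial (Fin n) k) := Set.range g ∪
      Set.range (fun i : Fin n => (X i : MvPolynomial (Fin n) k) ^ q - X i) with hF
  set F' : Set (MvPolynomial (Fin n) k) := φ '' F with hF'
  -- computation of images of generators
  have hl : ∀ j, φ (∑ t, C (M j t) * X t) = X j := by
    intro j
    rw [map_sum]
    have : ∀ t, φ (C (M j t) * X t) = C (M j t) * vφ t := by
      intro t
      rw [hCφ, hφ, aeval_X]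
    simp_rw [this, hvφ]
    exact sum_C_mul_collapse hMN X j
  have hφg : ∀ i, φ (g i) = ∑ j, C (P i j) *
      Polynomial.aeval (X j : MvPolynomial (Fin n) k) (f j) := by
    intro i
    rw [hfact i, map_sum]
    congr 1; ext j
    rw [hCφ]
    congr 1
    rw [← Polynomial.aeval_algHom_apply, hl j]
  have hφfe : ∀ i, φ ((X i : MvPolynomial (Fin n) k) ^ q - X i) =
      ∑ s, C (N i s) * ((X s : MvPolynomial (Fin n) k) ^ q - X s) := by
    intro i
    rw [map_sub, map_pow, hφ, aeval_X, hvφ]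
    exact frobenius_linear_comb hq (fun s => N i s)
  -- the univariate polynomials
  set s0 : Polynomial k := Polynomial.X ^ q - Polynomial.X with hs0
  have hs0ne : s0 ≠ 0 := FiniteField.X_pow_card_sub_X_ne_zero k hq2
  have hs0deg : s0.natDegree = q := FiniteField.X_pow_card_sub_X_natDegree_eq k hq2
  have haevs0 : ∀ j, Polynomial.aeval (X j : MvPolynomial (Fin n) k) s0 =
      (X j : MvPolynomial (Fin n) k) ^ q - X j := by
    intro j
    rw [hs0, map_sub, map_pow, Polynomial.aeval_X]
  set r : Fin n → Polynomial k := fun j => EuclideanDomain.gcd (f j) s0 with hr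
  have hr0 : ∀ j, r j ≠ 0 := by
    intro j hj
    exact hs0ne (EuclideanDomain.gcd_eq_zero_iff.1 hj).2
  set R : Fin n → Polynomial k := fun j => r j * Polynomial.C (r j).leadingCoeff⁻¹ with hR
  have hRmon : ∀ j, (R j).Monic := fun j => Polynomial.monic_mul_leadingCoeff_inv (hr0 j)
  have hrdR : ∀ j, r j ∣ R j := fun j => ⟨Polynomial.C (r j).leadingCoeff⁻¹, rfl⟩
  have hRdr : ∀ j, R j ∣ r j := by
    intro j
    refine ⟨Polynomial.C (r j).leadingCoeff, ?_⟩
    rw [hR, mul_assoc, ← map_mul, inv_mul_cancel₀ (Polynomial.leadingCoeff_ne_zero.2 (hr0 j))]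
    simp
  have hRdvd_f : ∀ j, R j ∣ f j := fun j =>
    (hRdr j).trans (EuclideanDomain.gcd_dvd_left _ _)
  have hRdvd_s : ∀ j, R j ∣ s0 := fun j =>
    (hRdr j).trans (EuclideanDomain.gcd_dvd_right _ _)
  have hroots : ∀ j, (R j).roots.toFinset.card = (R j).natDegree := fun j =>
    roots_card_of_dvd_fieldpoly hq (hRmon j).ne_zero (hRdvd_s j)
  have hfedeg : ∀ i : Fin n, ((X i : MvPolynomial (Fin n) k) ^ q - X i).totalDegree ≤ q := by
    intro i
    rw [sub_eq_add_neg]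
    apply (totalDegree_add _ _).trans
    rw [totalDegree_neg, totalDegree_X_pow, totalDegree_X]
    omega
  -- the key claim at each level E ≥ d + q
  have CL : ∀ E : ℕ, d + q ≤ E → Vsp F' E =
      (Ideal.span F').restrictScalars k ⊓ restrictTotalDegree (Fin n) k E := by
    intro E hE
    have hdE : d ≤ E := by omega
    have hqE : q ≤ E := by omega
    have hgV : ∀ i, φ (g i) ∈ Vsp F' E := by
      intro i
      exact mem_Vsp_of_mem ⟨g i, Or.inl ⟨i, rfl⟩, rfl⟩ ((hφd _).trans ((hdeg i).trans hdE))
    have hfeV : ∀ i, φ ((X i : MvPolynomial (Fin n) k) ^ q - X i) ∈ Vsp F' E := by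
      intro i
      exact mem_Vsp_of_mem ⟨_, Or.inr ⟨i, rfl⟩, rfl⟩ ((hφd _).trans ((hfedeg i).trans hqE))
    have hXqV : ∀ t, (X t : MvPolynomial (Fin n) k) ^ q - X t ∈ Vsp F' E := by
      intro t
      have heq : (X t : MvPolynomial (Fin n) k) ^ q - X t =
          ∑ i, C (M t i) * φ ((X i : MvPolynomial (Fin n) k) ^ q - X i) := by
        simp_rw [hφfe]
        exact (sum_C_mul_collapse hMN (fun s => (X s : MvPolynomial (Fin n) k) ^ q - X s) t).symm
      rw [heq]
      apply Submodule.sum_mem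
      intro i _
      rw [C_mul']
      exact Submodule.smul_mem _ _ (hfeV i)
    have hfeq : ∀ j, Polynomial.aeval (X j : MvPolynomial (Fin n) k) (f j) =
        ∑ i, C (Pi j i) * φ (g i) := by
      intro j
      simp_rw [hφg]
      exact (sum_C_mul_collapse hPiP
        (fun j' => Polynomial.aeval (X j' : MvPolynomial (Fin n) k) (f j')) j).symm
    have hfV : ∀ j, Polynomial.aeval (X j : MvPolynomial (Fin n) k) (f j) ∈ Vsp F' E := by
      intro j
      rw [hfeq j]
      apply Submodule.sum_mem
      intro i _
      rw [C_mul']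
      exact Submodule.smul_mem _ _ (hgV i)
    have hfd : ∀ j, (f j).natDegree ≤ d := by
      intro j
      apply (natDegree_le_totalDegree_polyaeval (f j) j).trans
      rw [hfeq j]
      apply (totalDegree_finset_sum _ _).trans
      apply Finset.sup_le
      intro i _
      apply (totalDegree_mul _ _).trans
      rw [totalDegree_C, zero_add]
      exact (hφd _).trans (hdeg i)
    have hrV : ∀ j, Polynomial.aeval (X j : MvPolynomial (Fin n) k) (r j) ∈ Vsp F' E := by
      intro j
      apply gcd_mem_Vsp F' E j (f j) s0 ((hfd j).trans hdE) (by rw [hs0deg]; exact hqE)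
        (hfV j)
      rw [haevs0 j]
      exact hXqV j
    have hRV : ∀ j, Polynomial.aeval (X j : MvPolynomial (Fin n) k) (R j) ∈ Vsp F' E := by
      intro j
      have : Polynomial.aeval (X j : MvPolynomial (Fin n) k) (R j) =
          C (r j).leadingCoeff⁻¹ * Polynomial.aeval (X j : MvPolynomial (Fin n) k) (r j) := by
        rw [hR, map_mul, Polynomial.aeval_C, mul_comm]
        rfl
      rw [this]
      apply mul_mem_Vsp (hrV j)
      apply (totalDegree_mul _ _).trans
      rw [totalDegree_C, zero_add]
      exact totalDegree_le_of_mem_Vsp (hrV j)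
    have hspan : Ideal.span F' = Ideal.span (Set.range fun j =>
        Polynomial.aeval (X j : MvPolynomial (Fin n) k) (R j)) := by
      apply le_antisymm
      · rw [Ideal.span_le]
        rintro _ ⟨x, hx, rfl⟩
        rcases hx with ⟨i, rfl⟩ | ⟨i, rfl⟩
        · rw [hφg i]
          apply Ideal.sum_mem
          intro j _
          obtain ⟨c, hc⟩ := hRdvd_f j
          rw [hc, map_mul]
          exact Ideal.mul_mem_left _ _ (Ideal.mul_mem_right _ _
            (Ideal.subset_span ⟨j, rfl⟩))
        · rw [hφfe i]
          apply Ideal.sum_mem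
          intro t _
          obtain ⟨c, hc⟩ := hRdvd_s t
          rw [← haevs0 t, hc, map_mul]
          exact Ideal.mul_mem_left _ _ (Ideal.mul_mem_right _ _
            (Ideal.subset_span ⟨t, rfl⟩))
      · rw [Ideal.span_le]
        rintro _ ⟨j, rfl⟩
        show Polynomial.aeval (X j : MvPolynomial (Fin n) k) (R j) ∈ Ideal.span F'
        have hfmem : Polynomial.aeval (X j : MvPolynomial (Fin n) k) (f j) ∈ Ideal.span F' := by
          rw [hfeq j]
          apply Ideal.sum_mem
          intro i _
          exact Ideal.mul_mem_left _ _ (Ideal.subset_span ⟨g i, Or.inl ⟨i, rfl⟩, rfl⟩)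
        have hsmem : Polynomial.aeval (X j : MvPolynomial (Fin n) k) s0 ∈ Ideal.span F' := by
          rw [haevs0 j]
          have heq : (X j : MvPolynomial (Fin n) k) ^ q - X j =
              ∑ i, C (M j i) * φ ((X i : MvPolynomial (Fin n) k) ^ q - X i) := by
            simp_rw [hφfe]
            exact (sum_C_mul_collapse hMN
              (fun s => (X s : MvPolynomial (Fin n) k) ^ q - X s) j).symm
          rw [heq]
          apply Ideal.sum_mem
          intro i _
          exact Ideal.mul_mem_left _ _ (Ideal.subset_span ⟨_, Or.inr ⟨i, rfl⟩, rfl⟩)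
        have hgcd : r j = f j * EuclideanDomain.gcdA (f j) s0 +
            s0 * EuclideanDomain.gcdB (f j) s0 := EuclideanDomain.gcd_eq_gcd_ab _ _
        have : Polynomial.aeval (X j : MvPolynomial (Fin n) k) (R j) =
            (Polynomial.aeval (X j : MvPolynomial (Fin n) k) (f j) *
              Polynomial.aeval (X j : MvPolynomial (Fin n) k) (EuclideanDomain.gcdA (f j) s0) +
             Polynomial.aeval (X j : MvPolynomial (Fin n) k) s0 *
              Polynomial.aeval (X j : MvPolynomial (Fin n) k) (EuclideanDomain.gcdB (f j) s0)) *
            Polynomial.aeval (X j : MvPolynomial (Fin n) k)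
              (Polynomial.C (r j).leadingCoeff⁻¹) := by
          rw [hR, map_mul]
          congr 1
          rw [show r j = f j * EuclideanDomain.gcdA (f j) s0 +
            s0 * EuclideanDomain.gcdB (f j) s0 from hgcd, map_add, map_mul, map_mul]
        rw [this]
        apply Ideal.mul_mem_right
        exact Ideal.add_mem _ (Ideal.mul_mem_right _ _ hfmem) (Ideal.mul_mem_right _ _ hsmem)
    exact Vsp_eq_span_inf F' E R hRmon hroots hRV hspan
  -- conclude
  have key1 := CL (e - 1) (by omega)
  have key2 := CL e (by omega)
  have hdeq : ∀ p : MvPolynomial (Fin n) k, (φ p).totalDegree = p.totalDegree :=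
    totalDegree_eq_of_inv φ ψ hψφ hφd hψd
  ext p
  rw [Submodule.mem_inf, Vsp_mem_iff φ ψ hψφ hφd hψd F e p,
    Vsp_mem_iff φ ψ hψφ hφd hψd F (e - 1) p, ← hF', key1, key2,
    Submodule.mem_inf, Submodule.mem_inf, mem_restrictTotalDegree, mem_restrictTotalDegree,
    mem_restrictTotalDegree, hdeq p]
  constructor
  · rintro ⟨⟨hI, _⟩, hd1⟩
    exact ⟨hI, hd1⟩
  · rintro ⟨hI, hd1⟩
    exact ⟨⟨hI, by omega⟩, hd1⟩
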